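/- arXiv:1403.6498 — 5 statements merged into one kernel-verified Lean document; each statement's English description precedes it below -/
import Mathlib

section
/- Let V be a finite-dimensional real normed vector space. For every subset S ⊆ V, the asymptotic cone AC(S) is a closed subset of V. -/
open Pointwise Bornology

/-- A subset `C` of a real vector space is a cone if `t • C = C` for every `t > 0`. -/
def IsCone {V : Type*} [NormedAddCommGroup V] [NormedSpace ℝ V] (C : Set V) : Prop :=
  ∀ t : ℝ, 0 < t → t • C = C

/-- The asymptotic cone of a subset `S`: the set of `ξ` such that every open cone
containing `ξ` meets `S` in an unbounded set, together with `0`. -/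
def asymptoticCone' {V : Type*} [NormedAddCommGroup V] [NormedSpace ℝ V] (S : Set V) : Set V :=
  {ξ : V | ∀ C : Set V, IsOpen C → IsCone C → ξ ∈ C → ¬ IsBounded (C ∩ S)} ∪ {0}

theorem notMem_asymptoticCone'_of_mem_isCone {V : Type*} [NormedAddCommGroup V]
    [NormedSpace ℝ V] {S C : Set V} (hCo : IsOpen C) (hCc : IsCone C)
    (hCS : IsBounded (C ∩ S)) {x : V} (hxC : x ∈ C) (hx0 : x ≠ 0) :
    x ∉ asymptoticCone' S := by
  rintro (hx | hx)
  · exact hx C hCo hCc hxC hCS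
  · exact hx0 hx

theorem asymptoticCone_isClosed_general {V : Type*} [NormedAddCommGroup V] [NormedSpace ℝ V]
    (S : Set V) :
    IsClosed (asymptoticCone' S) := by
  rw [← isOpen_compl_iff, isOpen_iff_forall_mem_open]
  intro ξ hξ
  obtain ⟨hξ0, C, hCo, hCc, hξC, hCS⟩ :
      ξ ≠ 0 ∧ ∃ C : Set V, IsOpen C ∧ IsCone C ∧ ξ ∈ C ∧ IsBounded (C ∩ S) := by
    simpa [asymptoticCone'] using hξ
  exact ⟨C \ {0}, fun x hx => notMem_asymptoticCone'_of_mem_isCone hCo hCc hCS hx.1 hx.2,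
    hCo.sdiff isClosed_singleton, hξC, hξ0⟩

/-- The asymptotic cone of any subset of a finite-dimensional real normed vector space
is closed. -/
theorem asymptoticCone_isClosed {V : Type*} [NormedAddCommGroup V] [NormedSpace ℝ V]
    [FiniteDimensional ℝ V] (S : Set V) :
    IsClosed (asymptoticCone' S) :=
  asymptoticCone_isClosed_general S
end

section
/- Let V be a finite-dimensional real normed vector space and let {S_i}_{i ∈ I} be a finite nonempty collection of subsets of V. Then AC(⋃_{i ∈ I} S_i) ⊆ ⋃_{i ∈ I} AC(S_i). -/
open Pointwise Bornology

/-! If `ξ ≠ 0` lies in no `AC(S i)`, choose open cones `C i ∋ ξ` with `C i ∩ S i` bounded.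
Their finite intersection is again an open cone containing `ξ`, and it meets
`⋃ i, S i` in a subset of the bounded set `⋃ i, C i ∩ S i`. -/

section

variable {V : Type*} [NormedAddCommGroup V] [NormedSpace ℝ V]

theorem IsCone.iInter {ι : Sort*} {C : ι → Set V} (hC : ∀ i, IsCone (C i)) :
    IsCone (⋂ i, C i) := fun t ht => by
  rw [← Set.image_smul, Set.image_iInter (MulAction.bijective₀ ht.ne')]
  exact Set.iInter_congr fun i => hC i t ht

theorem zero_mem_asymptoticCone' (S : Set V) : (0 : V) ∈ asymptoticCone' S :=
  Or.inr rfl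

theorem not_isBounded_inter_of_mem_asymptoticCone' {S C : Set V} {ξ : V}
    (hξ : ξ ∈ asymptoticCone' S) (hξ0 : ξ ≠ 0) (hCo : IsOpen C) (hCc : IsCone C)
    (hξC : ξ ∈ C) : ¬ IsBounded (C ∩ S) :=
  hξ.resolve_right hξ0 C hCo hCc hξC

theorem exists_isCone_isBounded_inter_of_notMem_asymptoticCone' {S : Set V} {ξ : V}
    (hξ : ξ ∉ asymptoticCone' S) :
    ∃ C : Set V, IsOpen C ∧ IsCone C ∧ ξ ∈ C ∧ IsBounded (C ∩ S) := by
  simp only [asymptoticCone', Set.mem_union, Set.mem_ofPred_eq, not_or, not_forall,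
    not_not] at hξ
  obtain ⟨⟨C, hCo, hCc, hξC, hCS⟩, -⟩ := hξ
  exact ⟨C, hCo, hCc, hξC, hCS⟩

end

theorem asymptoticCone_iUnion_subset_general {V : Type*} [NormedAddCommGroup V] [NormedSpace ℝ V]
    {I : Type*} [Finite I] [Nonempty I] (S : I → Set V) :
    asymptoticCone' (⋃ i, S i) ⊆ ⋃ i, asymptoticCone' (S i) := by
  intro ξ hξ
  by_contra h
  simp only [Set.mem_iUnion, not_exists] at h
  have hξ0 : ξ ≠ 0 := fun h0 => h (Classical.arbitrary I) (h0 ▸ zero_mem_asymptoticCone' _)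
  choose C hCo hCc hξC hCS using
    fun i => exists_isCone_isBounded_inter_of_notMem_asymptoticCone' (h i)
  refine not_isBounded_inter_of_mem_asymptoticCone' hξ hξ0 (isOpen_iInter_of_finite hCo)
    (IsCone.iInter hCc) (Set.mem_iInter.2 hξC) ?_
  refine (isBounded_iUnion.2 hCS).subset ?_
  rw [Set.inter_iUnion]
  exact Set.iUnion_mono fun i => Set.inter_subset_inter_left _ (Set.iInter_subset C i)

/-- The asymptotic cone of a finite union is contained in the union of the
asymptotic cones. -/
theorem asymptoticCone_iUnion_subset {V : Type*} [NormedAddCommGroup V] [NormedSpace ℝ V]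
    [FiniteDimensional ℝ V] {I : Type*} [Finite I] [Nonempty I] (S : I → Set V) :
    asymptoticCone' (⋃ i, S i) ⊆ ⋃ i, asymptoticCone' (S i) :=
  asymptoticCone_iUnion_subset_general S
end

section
/- Let V be a finite-dimensional real normed vector space, let S, T ⊆ V be subsets, and let B ⊆ V be a bounded subset such that S ⊆ T + B = {t + b : t ∈ T, b ∈ B}. Then AC(S) ⊆ AC(T). -/
open Pointwise Bornology

/-- The asymptotic cone of a subset `S`: the set of `ξ` such that every open cone
containing `ξ` meets `S` in an unbounded set, together with `0`. -/
def asymptoticConeOpen {V : Type*} [NormedAddCommGroup V] [NormedSpace ℝ V] (S : Set V) : Set V :=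
  {ξ : V | ∀ C : Set V, IsOpen C → IsCone C → ξ ∈ C → ¬ IsBounded (C ∩ S)} ∪ {0}

/-!
Given an open cone `C ∋ ξ` with `C ∩ T` bounded, take a ball `ball ξ ε ⊆ C` and let `C'` be the
cone spanned by the smaller ball `ball ξ (ε / 2)`. A point `s ∈ C'` of large norm lies in
`r • ball ξ (ε / 2)` with `r` large, so every point within a fixed distance `M` of `s` lies in
`r • ball ξ ε ⊆ C`. Hence a far-out `s = t + b ∈ C' ∩ S` has `t ∈ C ∩ T`, so `C' ∩ S` is
contained in a ball together with `(C ∩ T) + B`, which is bounded.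
-/

section

open Set Metric

variable {V : Type*} [NormedAddCommGroup V] [NormedSpace ℝ V]

theorem IsCone.smul_mem_iff {C : Set V} (hC : IsCone C) {t : ℝ} (ht : 0 < t) {v : V} :
    t • v ∈ C ↔ v ∈ C := by
  rw [← smul_mem_smul_set_iff₀ ht.ne' C v, hC t ht]

def positiveMultiples (U : Set V) : Set V :=
  ⋃ r ∈ Ioi (0 : ℝ), r • U

theorem mem_positiveMultiples {U : Set V} {v : V} :
    v ∈ positiveMultiples U ↔ ∃ r : ℝ, 0 < r ∧ ∃ u ∈ U, r • u = v := by
  simp [positiveMultiples, mem_smul_set]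

theorem subset_positiveMultiples (U : Set V) : U ⊆ positiveMultiples U :=
  fun u hu => mem_positiveMultiples.2 ⟨1, one_pos, u, hu, one_smul ℝ u⟩

theorem isOpen_positiveMultiples {U : Set V} (hU : IsOpen U) : IsOpen (positiveMultiples U) :=
  isOpen_biUnion fun _ hr => hU.smul₀ (ne_of_gt hr)

theorem isCone_positiveMultiples (U : Set V) : IsCone (positiveMultiples U) := by
  intro t ht
  ext v
  simp only [mem_smul_set, mem_positiveMultiples]
  constructor
  · rintro ⟨_, ⟨r, hr, u, hu, rfl⟩, rfl⟩
    exact ⟨t * r, mul_pos ht hr, u, hu, mul_smul t r u⟩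
  · rintro ⟨r, hr, u, hu, rfl⟩
    refine ⟨(t⁻¹ * r) • u, ⟨t⁻¹ * r, by positivity, u, hu, rfl⟩, ?_⟩
    rw [smul_smul, ← mul_assoc, mul_inv_cancel₀ ht.ne', one_mul]

theorem IsOpen.exists_isCone_closedBall_subset {C : Set V} (hCo : IsOpen C) (hC : IsCone C)
    {ξ : V} (hξ : ξ ∈ C) (M : ℝ) :
    ∃ C' : Set V, IsOpen C' ∧ IsCone C' ∧ ξ ∈ C' ∧
      ∃ R : ℝ, ∀ v ∈ C', R < ‖v‖ → closedBall v M ⊆ C := by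
  obtain ⟨ε, hε, hball⟩ := Metric.isOpen_iff.1 hCo ξ hξ
  refine ⟨positiveMultiples (ball ξ (ε / 2)), isOpen_positiveMultiples isOpen_ball,
    isCone_positiveMultiples _, subset_positiveMultiples _ (mem_ball_self (half_pos hε)),
    2 * M / ε * (‖ξ‖ + ε / 2), ?_⟩
  rintro v hv hRv w hw
  obtain ⟨r, hr, u, hu, rfl⟩ := mem_positiveMultiples.1 hv
  have hu_norm : ‖u‖ < ‖ξ‖ + ε / 2 := by
    have := norm_le_norm_add_norm_sub' u ξ
    rw [mem_ball, dist_eq_norm] at hu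
    linarith
  have hr_large : M < r * (ε / 2) := by
    rw [norm_smul, Real.norm_of_nonneg hr.le] at hRv
    have : 2 * M / ε * (‖ξ‖ + ε / 2) < r * (‖ξ‖ + ε / 2) :=
      hRv.trans_le (by gcongr)
    have := lt_of_mul_lt_mul_right this (by positivity)
    rw [div_lt_iff₀ hε] at this
    linarith
  have hw_scaled : r⁻¹ • w ∈ ball ξ ε := by
    have hwu : dist (r⁻¹ • w) u ≤ r⁻¹ * M := by
      calc dist (r⁻¹ • w) u = dist (r⁻¹ • w) (r⁻¹ • r • u) := by
            rw [smul_smul, inv_mul_cancel₀ hr.ne', one_smul]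
        _ = r⁻¹ * dist w (r • u) := by
            rw [dist_smul₀, Real.norm_of_nonneg (inv_nonneg.2 hr.le)]
        _ ≤ r⁻¹ * M := by gcongr; exact mem_closedBall.1 hw
    have hM : r⁻¹ * M < ε / 2 := by
      rw [inv_mul_lt_iff₀ hr]; exact hr_large
    rw [mem_ball] at hu ⊢
    linarith [dist_triangle (r⁻¹ • w) u ξ]
  have : r • r⁻¹ • w ∈ C := (hC.smul_mem_iff hr).2 (hball hw_scaled)
  rwa [smul_smul, mul_inv_cancel₀ hr.ne', one_smul] at this

end

theorem asymptoticCone_subset_of_subset_add_bounded_general {V : Type*} [NormedAddCommGroup V]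
    [NormedSpace ℝ V] (S T B : Set V)
    (hB : IsBounded B) (hST : S ⊆ T + B) :
    asymptoticConeOpen S ⊆ asymptoticConeOpen T := by
  rintro ξ (hξ | hξ)
  · refine Or.inl fun C hCo hC hξC hCT => ?_
    obtain ⟨M, hM⟩ := hB.subset_closedBall 0
    obtain ⟨C', hC'o, hC', hξC', R, hR⟩ := hCo.exists_isCone_closedBall_subset hC hξC M
    refine hξ C' hC'o hC' hξC' <|
      ((Metric.isBounded_closedBall (x := 0) (r := R)).union (hCT.add hB)).subset ?_
    rintro s ⟨hsC', hsS⟩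
    rcases le_or_gt ‖s‖ R with hs | hs
    · exact Or.inl (mem_closedBall_zero_iff.2 hs)
    · obtain ⟨t, ht, b, hb, rfl⟩ := hST hsS
      have htC : t ∈ C := hR _ hsC' hs <| by
        simpa [dist_eq_norm] using hM hb
      exact Or.inr ⟨t, ⟨htC, ht⟩, b, hb, rfl⟩
  · exact Or.inr hξ

/-- If `S` is contained in a translate `T + B` of `T` by a bounded set `B`, then the
asymptotic cone of `S` is contained in the asymptotic cone of `T`. -/
theorem asymptoticCone_subset_of_subset_add_bounded {V : Type*} [NormedAddCommGroup V]
    [NormedSpace ℝ V] [FiniteDimensional ℝ V] (S T B : Set V)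
    (hB : IsBounded B) (hST : S ⊆ T + B) :
    asymptoticConeOpen S ⊆ asymptoticConeOpen T :=
  asymptoticCone_subset_of_subset_add_bounded_general S T B hB hST
end

section
/- Let V be a finite-dimensional real normed vector space, let Z ⊆ V be a nonempty closed cone, and let C ⊆ V be a cone whose closure satisfies closure(C) ∩ Z ⊆ {0}. Then for every real d ≥ 0, the set {x ∈ C : infDist(x, Z) ≤ d} is bounded. -/
open Pointwise Bornology

/-- If `Z` is a nonempty closed cone and `C` is a cone such that the closure of `C`
meets `Z` only possibly at the origin, then the set of points of `C` lying within
distance `d` of `Z` is bounded. -/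
theorem bounded_of_cone_infDist_le {V : Type*} [NormedAddCommGroup V] [NormedSpace ℝ V]
    [FiniteDimensional ℝ V] (Z : Set V) (hZne : Z.Nonempty) (hZclosed : IsClosed Z)
    (hZcone : IsCone Z) (C : Set V) (hC : IsCone C) (hCZ : closure C ∩ Z ⊆ {0})
    (d : ℝ) (hd : 0 ≤ d) :
    IsBounded {x ∈ C | Metric.infDist x Z ≤ d} := by
  by_contra hb
  -- get a sequence in the set with norms tending to infinity
  have hseq : ∀ n : ℕ, ∃ x : V, x ∈ C ∧ Metric.infDist x Z ≤ d ∧ (n : ℝ) + 1 ≤ ‖x‖ := by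
    intro n
    by_contra h
    push_neg at h
    apply hb
    apply (Metric.isBounded_iff_subset_closedBall 0).2
    refine ⟨(n : ℝ) + 1, fun x hx => ?_⟩
    obtain ⟨hxC, hxd⟩ := hx
    simp only [Metric.mem_closedBall, dist_zero_right]
    exact le_of_lt (h x hxC hxd)
  choose x hxC hxd hxn using hseq
  have hxpos : ∀ n : ℕ, (0 : ℝ) < ‖x n‖ := fun n =>
    lt_of_lt_of_le (by positivity) (hxn n)
  set y : ℕ → V := fun n => (‖x n‖)⁻¹ • x n with hy
  have hyC : ∀ n, y n ∈ C := by
    intro n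
    have := hC (‖x n‖)⁻¹ (inv_pos.2 (hxpos n))
    rw [← this]
    exact Set.smul_mem_smul_set (hxC n)
  have hynorm : ∀ n, ‖y n‖ = 1 := by
    intro n
    simp [hy, norm_smul, abs_of_pos (inv_pos.2 (hxpos n)), inv_mul_cancel₀ (hxpos n).ne']
  have hyd : ∀ n, Metric.infDist (y n) Z ≤ d / ((n : ℝ) + 1) := by
    intro n
    have hne : (‖x n‖)⁻¹ ≠ 0 := (inv_pos.2 (hxpos n)).ne'
    have hZ : (‖x n‖)⁻¹ • Z = Z := hZcone _ (inv_pos.2 (hxpos n))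
    have := infDist_smul₀ (𝕜 := ℝ) hne Z (x n)
    rw [hZ] at this
    rw [hy]
    calc Metric.infDist ((‖x n‖)⁻¹ • x n) Z = ‖(‖x n‖)⁻¹‖ * Metric.infDist (x n) Z := this
      _ ≤ (↑n + 1)⁻¹ * d := by
          apply mul_le_mul _ (hxd n) (Metric.infDist_nonneg) (by positivity)
          rw [norm_inv, norm_norm]
          exact inv_anti₀ (by positivity) (hxn n)
      _ = d / ((n : ℝ) + 1) := by ring
  -- compactness of the sphere
  have hcpt : IsCompact (Metric.sphere (0 : V) 1) := isCompact_sphere 0 1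
  have hmem : ∀ n, y n ∈ Metric.sphere (0 : V) 1 := fun n => by
    simp [mem_sphere_iff_norm, hynorm n]
  obtain ⟨a, ha, φ, hφ, hconv⟩ := hcpt.tendsto_subseq hmem
  have haC : a ∈ closure C :=
    mem_closure_of_tendsto hconv (Filter.Eventually.of_forall fun n => hyC (φ n))
  have hinf0 : Metric.infDist a Z = 0 := by
    have hcont : Filter.Tendsto (fun n => Metric.infDist (y (φ n)) Z) Filter.atTop
        (nhds (Metric.infDist a Z)) :=
      ((Metric.continuous_infDist_pt Z).continuousAt.tendsto.comp hconv)
    have h0 : Filter.Tendsto (fun n => Metric.infDist (y (φ n)) Z) Filter.atTop (nhds 0) := by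
      apply squeeze_zero (fun n => Metric.infDist_nonneg) (fun n => hyd (φ n))
      have : Filter.Tendsto (fun n : ℕ => d / ((n : ℝ) + 1)) Filter.atTop (nhds 0) :=
        Filter.Tendsto.div_atTop tendsto_const_nhds
          (Filter.tendsto_atTop_add_const_right _ 1 tendsto_natCast_atTop_atTop)
      exact this.comp hφ.tendsto_atTop
    exact tendsto_nhds_unique hcont h0
  have haZ : a ∈ Z := by
    rw [← hZclosed.closure_eq]
    exact (Metric.mem_closure_iff_infDist_zero hZne).2 hinf0
  have := hCZ ⟨haC, haZ⟩
  simp only [Set.mem_singleton_iff] at this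
  rw [this] at ha
  simp at ha
end

section
/- Let n ≥ 1, let K ⊆ ℝⁿ be a compact set, and let (φ_N)_{N ∈ ℕ} be a family of smooth functions ℝⁿ → ℝ, each supported in K, such that for every multi-index γ there exists a constant C_γ > 0 with sup_{x ∈ ℝⁿ} |∂^{γ+β} φ_N(x)| ≤ C_γ^{|β|+1} (N+1)^{|β|} for every N ∈ ℕ and every multi-index β with |β| ≤ N. Then there exist constants B > 0 and C > 0 such that for every N ∈ ℕ and all x, y ∈ ℝⁿ, |∫_{ℝⁿ} φ_N(v) · e^{⟨x,v⟩} · e^{i⟨y,v⟩} dv| ≤ C^{N+1} (N+1)^N e^{B‖x‖} / (1 + ‖y‖)^N. -/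
open MeasureTheory

/-- Iterated partial derivative of a real-valued function on `ℝⁿ` along a multi-index,
encoded as a list of coordinate directions. -/
noncomputable def multiDeriv {n : ℕ} :
    List (Fin n) → (EuclideanSpace ℝ (Fin n) → ℝ) → EuclideanSpace ℝ (Fin n) → ℝ
  | [], f => f
  | i :: β, f => fun x => fderiv ℝ (multiDeriv β f) x (EuclideanSpace.single i 1)

namespace PWAux

variable {n : ℕ}

lemma multiDeriv_contDiff (f : EuclideanSpace ℝ (Fin n) → ℝ) (hf : ContDiff ℝ (⊤ : ℕ∞) f) :
    ∀ β : List (Fin n), ContDiff ℝ (⊤ : ℕ∞) (multiDeriv β f)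
  | [] => hf
  | i :: β => by
    have h := multiDeriv_contDiff f hf β
    exact (h.fderiv_right (m := (⊤ : ℕ∞)) (by simp)).clm_apply contDiff_const

lemma multiDeriv_support {K : Set (EuclideanSpace ℝ (Fin n))} (hK : IsClosed K)
    (f : EuclideanSpace ℝ (Fin n) → ℝ) (hf : Function.support f ⊆ K) :
    ∀ β : List (Fin n), Function.support (multiDeriv β f) ⊆ K
  | [] => hf
  | i :: β => by
    have h := multiDeriv_support hK f hf β
    intro x hx
    by_contra hxK
    apply hx
    have hev : multiDeriv β f =ᶠ[nhds x] 0 := by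
      filter_upwards [hK.isOpen_compl.mem_nhds hxK] with z hz
      exact Function.notMem_support.1 fun hs => hz (h hs)
    show fderiv ℝ (multiDeriv β f) x (EuclideanSpace.single i 1) = 0
    rw [hev.fderiv_eq, show (0 : EuclideanSpace ℝ (Fin n) → ℝ) = fun _ => (0:ℝ) from rfl,
      fderiv_const_apply]
    simp

lemma integrable_aux {K : Set (EuclideanSpace ℝ (Fin n))} (hK : IsCompact K)
    {h : EuclideanSpace ℝ (Fin n) → ℂ} (hc : Continuous h) (hs : Function.support h ⊆ K) :
    Integrable h := by
  apply hc.integrable_of_hasCompactSupport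
  exact HasCompactSupport.intro hK fun x hx => Function.notMem_support.1 fun hm => hx (hs hm)

variable (x y : EuclideanSpace ℝ (Fin n))

/-- the complex linear phase -/
noncomputable def L : EuclideanSpace ℝ (Fin n) →L[ℝ] ℂ :=
  Complex.ofRealCLM.comp (innerSL ℝ x) + Complex.I • Complex.ofRealCLM.comp (innerSL ℝ y)

lemma L_apply (v : EuclideanSpace ℝ (Fin n)) :
    L x y v = ((inner ℝ x v : ℝ) : ℂ) + Complex.I * ((inner ℝ y v : ℝ) : ℂ) := by
  simp [L, smul_eq_mul]

lemma L_single (j : Fin n) :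
    L x y (EuclideanSpace.single j 1) = ((x j : ℝ) : ℂ) + Complex.I * ((y j : ℝ) : ℂ) := by
  rw [L_apply]
  norm_num [EuclideanSpace.inner_single_right, real_inner_comm]

lemma g_hasFDerivAt (v : EuclideanSpace ℝ (Fin n)) :
    HasFDerivAt (fun w => Complex.exp (L x y w)) (Complex.exp (L x y v) • L x y) v :=
  (L x y).hasFDerivAt.cexp

lemma ibp {K : Set (EuclideanSpace ℝ (Fin n))} (hK : IsCompact K)
    {f : EuclideanSpace ℝ (Fin n) → ℝ} (hf : ContDiff ℝ (⊤ : ℕ∞) f)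
    (hsupp : Function.support f ⊆ K) (j : Fin n) :
    ∫ v, (multiDeriv [j] f v : ℂ) * Complex.exp (L x y v) =
      -(((x j : ℝ) : ℂ) + Complex.I * ((y j : ℝ) : ℂ)) *
        ∫ v, (f v : ℂ) * Complex.exp (L x y v) := by
  set g : EuclideanSpace ℝ (Fin n) → ℂ := fun w => Complex.exp (L x y w) with hg
  have hgc : Continuous g := Complex.continuous_exp.comp (L x y).continuous
  have hfd : ∀ v, HasFDerivAt (fun w => (f w : ℂ))
      (Complex.ofRealCLM.comp (fderiv ℝ f v)) v := fun v =>
    Complex.ofRealCLM.hasFDerivAt.comp v (hf.differentiable (by simp) v).hasFDerivAt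
  have hEf : ∀ v, fderiv ℝ (fun w => (f w : ℂ)) v (EuclideanSpace.single j 1) =
      ((multiDeriv [j] f v : ℝ) : ℂ) := by
    intro v
    rw [(hfd v).fderiv]
    rfl
  have hEg : ∀ v, fderiv ℝ g v (EuclideanSpace.single j 1) =
      g v * (((x j : ℝ) : ℂ) + Complex.I * ((y j : ℝ) : ℂ)) := by
    intro v
    rw [(g_hasFDerivAt x y v).fderiv]
    simp [smul_eq_mul, L_single]
    left; rfl
  have hd1 : Continuous (multiDeriv [j] f) := (multiDeriv_contDiff f hf [j]).continuous
  have hsupp1 : Function.support (multiDeriv [j] f) ⊆ K :=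
    multiDeriv_support hK.isClosed f hsupp [j]
  have h1 : Integrable (fun v => fderiv ℝ (fun w => (f w : ℂ)) v
      (EuclideanSpace.single j 1) * g v) := by
    simp only [hEf]
    apply integrable_aux hK ((Complex.continuous_ofReal.comp hd1).mul hgc)
    exact (Function.support_mul_subset_left _ _).trans
      ((Function.support_comp_subset Complex.ofReal_zero _).trans hsupp1)
  have h2 : Integrable (fun v => (f v : ℂ) * fderiv ℝ g v (EuclideanSpace.single j 1)) := by
    simp only [hEg]
    apply integrable_aux hK ((Complex.continuous_ofReal.comp hf.continuous).mul
      (hgc.mul continuous_const))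
    intro v hv
    rcases Function.support_mul_subset_left _ _ hv with hv'
    exact hsupp ((Function.support_comp_subset Complex.ofReal_zero f) hv')
  have h3 : Integrable (fun v => (f v : ℂ) * g v) := by
    apply integrable_aux hK ((Complex.continuous_ofReal.comp hf.continuous).mul hgc)
    intro v hv
    rcases Function.support_mul_subset_left _ _ hv with hv'
    exact hsupp ((Function.support_comp_subset Complex.ofReal_zero f) hv')
  have key := integral_mul_fderiv_eq_neg_fderiv_mul_of_integrable (μ := volume)
    (v := EuclideanSpace.single j 1) h1 h2 h3
    (fun v _ => (hfd v).differentiableAt) (fun v _ => (g_hasFDerivAt x y v).differentiableAt)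
  simp only [hEf, hEg] at key
  have h4 : ∫ v, (f v : ℂ) * (g v * (((x j : ℝ) : ℂ) + Complex.I * ((y j : ℝ) : ℂ))) =
      (((x j : ℝ) : ℂ) + Complex.I * ((y j : ℝ) : ℂ)) * ∫ v, (f v : ℂ) * g v := by
    rw [← integral_const_mul]
    congr 1
    funext v
    ring
  rw [h4] at key
  show (∫ v, (multiDeriv [j] f v : ℂ) * g v) =
      -(((x j : ℝ) : ℂ) + Complex.I * ((y j : ℝ) : ℂ)) * ∫ v, (f v : ℂ) * g v
  linear_combination key

lemma ibp_iter {K : Set (EuclideanSpace ℝ (Fin n))} (hK : IsCompact K)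
    {f : EuclideanSpace ℝ (Fin n) → ℝ} (hf : ContDiff ℝ (⊤ : ℕ∞) f)
    (hsupp : Function.support f ⊆ K) (j : Fin n) (k : ℕ) :
    ∫ v, (multiDeriv (List.replicate k j) f v : ℂ) * Complex.exp (L x y v) =
      (-(((x j : ℝ) : ℂ) + Complex.I * ((y j : ℝ) : ℂ))) ^ k *
        ∫ v, (f v : ℂ) * Complex.exp (L x y v) := by
  induction k with
  | zero => simp [multiDeriv]
  | succ k ih =>
    have hstep := ibp x y hK (multiDeriv_contDiff f hf (List.replicate k j))
      (multiDeriv_support hK.isClosed f hsupp (List.replicate k j)) j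
    have : multiDeriv (List.replicate (k+1) j) f =
        multiDeriv [j] (multiDeriv (List.replicate k j) f) := rfl
    rw [this, hstep, ih, pow_succ]
    ring

lemma norm_int_le {K : Set (EuclideanSpace ℝ (Fin n))} (hK : IsCompact K)
    {R : ℝ} (hKR : K ⊆ Metric.closedBall 0 R)
    {h : EuclideanSpace ℝ (Fin n) → ℝ} (hc : Continuous h)
    (hs : Function.support h ⊆ K) {M : ℝ} (hM : ∀ v, |h v| ≤ M) :
    ‖∫ v, (h v : ℂ) * Complex.exp (L x y v)‖ ≤
      M * Real.exp (R * ‖x‖) * (volume K).toReal := by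
  have hzero : ∀ v, v ∉ K → (h v : ℂ) * Complex.exp (L x y v) = 0 := by
    intro v hv
    have : h v = 0 := Function.notMem_support.1 fun hm => hv (hs hm)
    simp [this]
  rw [← setIntegral_eq_integral_of_forall_compl_eq_zero hzero]
  have hmeas : AEStronglyMeasurable (fun v => (h v : ℂ) * Complex.exp (L x y v))
      (volume.restrict K) :=
    (((Complex.continuous_ofReal.comp hc).mul
      (Complex.continuous_exp.comp (L x y).continuous)).aestronglyMeasurable).restrict
  apply norm_setIntegral_le_of_norm_le_const hK.measure_lt_top
  intro v hv
  have hre : (L x y v).re = (inner ℝ x v : ℝ) := by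
    rw [L_apply]; simp
  rw [norm_mul, Complex.norm_exp, hre,
    Complex.norm_real, Real.norm_eq_abs]
  have hv' : ‖v‖ ≤ R := by
    simpa [Metric.mem_closedBall, dist_zero_right] using hKR hv
  have hx1 : (inner ℝ x v : ℝ) ≤ R * ‖x‖ := by
    calc (inner ℝ x v : ℝ) ≤ ‖x‖ * ‖v‖ := real_inner_le_norm x v
    _ ≤ ‖x‖ * R := by gcongr
    _ = R * ‖x‖ := mul_comm _ _
  have h0 : (0:ℝ) ≤ M := (abs_nonneg _).trans (hM v)
  exact mul_le_mul (hM v) (Real.exp_le_exp.2 hx1) (Real.exp_nonneg _) h0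

lemma exists_coord (hn : 1 ≤ n) (y : EuclideanSpace ℝ (Fin n)) :
    ∃ j, ‖y‖ ≤ Real.sqrt n * |y j| := by
  have : Nonempty (Fin n) := ⟨⟨0, hn⟩⟩
  obtain ⟨j, -, hj⟩ := Finset.exists_max_image Finset.univ (fun i => |y i|)
    Finset.univ_nonempty
  refine ⟨j, ?_⟩
  have h1 : ‖y‖ ≤ Real.sqrt (n * |y j| ^ 2) := by
    rw [EuclideanSpace.norm_eq]
    apply Real.sqrt_le_sqrt
    calc ∑ i, ‖y i‖ ^ 2 ≤ ∑ _i : Fin n, |y j| ^ 2 := by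
          apply Finset.sum_le_sum
          intro i _
          rw [Real.norm_eq_abs]
          exact pow_le_pow_left₀ (abs_nonneg _) (hj i (Finset.mem_univ i)) 2
      _ = n * |y j| ^ 2 := by simp [Finset.sum_const, Finset.card_univ, nsmul_eq_mul]
  calc ‖y‖ ≤ Real.sqrt (n * |y j| ^ 2) := h1
    _ = Real.sqrt n * |y j| := by
        rw [Real.sqrt_mul (by positivity), Real.sqrt_sq_eq_abs, abs_abs]

end PWAux

/-- Quantitative Paley–Wiener estimate for a Hörmander-type family of cutoff functions:
if the `φ_N` are smooth, supported in a fixed compact set `K`, and satisfy the derivative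
bounds `sup |∂^{γ+β} φ_N| ≤ C_γ^{|β|+1} (N+1)^{|β|}` for `|β| ≤ N`, then their
Fourier–Laplace transforms satisfy
`|𝓕[φ_N](x + iy)| ≤ C^{N+1} (N+1)^N e^{B‖x‖} / (1+‖y‖)^N`. -/
theorem fourierLaplace_cutoff_estimate (n : ℕ) (hn : 1 ≤ n)
    (K : Set (EuclideanSpace ℝ (Fin n))) (hK : IsCompact K)
    (φ : ℕ → EuclideanSpace ℝ (Fin n) → ℝ)
    (hsmooth : ∀ N, ContDiff ℝ (⊤ : ℕ∞) (φ N))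
    (hsupp : ∀ N, Function.support (φ N) ⊆ K)
    (hder : ∀ γ : List (Fin n), ∃ Cγ : ℝ, 0 < Cγ ∧ ∀ N : ℕ, ∀ β : List (Fin n),
      β.length ≤ N → ∀ x, |multiDeriv (γ ++ β) (φ N) x| ≤
        Cγ ^ (β.length + 1) * ((N : ℝ) + 1) ^ β.length) :
    ∃ B : ℝ, 0 < B ∧ ∃ C : ℝ, 0 < C ∧ ∀ N : ℕ, ∀ x y : EuclideanSpace ℝ (Fin n),
      ‖∫ v, (φ N v : ℂ) *
          Complex.exp (((inner ℝ x v : ℝ) : ℂ) + Complex.I * ((inner ℝ y v : ℝ) : ℂ))‖ ≤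
        C ^ (N + 1) * ((N : ℝ) + 1) ^ N * Real.exp (B * ‖x‖) / (1 + ‖y‖) ^ N := by
  classical
  obtain ⟨C0, hC0, hC0b⟩ := hder []
  simp only [List.nil_append] at hC0b
  obtain ⟨R0, hR0⟩ := hK.isBounded.subset_closedBall 0
  set R : ℝ := max R0 0 with hRdef
  have hR : K ⊆ Metric.closedBall 0 R :=
    hR0.trans (Metric.closedBall_subset_closedBall (le_max_left _ _))
  have hRnn : 0 ≤ R := le_max_right _ _
  set V : ℝ := (volume K).toReal with hVdef
  have hVnn : 0 ≤ V := ENNReal.toReal_nonneg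
  have hsq : (1:ℝ) ≤ Real.sqrt n := by
    rw [show (1:ℝ) = Real.sqrt 1 by simp]
    exact Real.sqrt_le_sqrt (by exact_mod_cast hn)
  have hsqnn : (0:ℝ) ≤ Real.sqrt n := by positivity
  set C : ℝ := (2 * Real.sqrt n + 2) * (C0 + 1) * (V + 1) with hCdef
  have hC1 : 1 ≤ C := by
    rw [hCdef]
    calc (1:ℝ) = 1 * 1 * 1 := by norm_num
      _ ≤ (2 * Real.sqrt n + 2) * (C0 + 1) * (V + 1) := by
          gcongr <;> linarith
  have hCpos : 0 < C := lt_of_lt_of_le one_pos hC1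
  refine ⟨R + 1, by positivity, C, hCpos, ?_⟩
  intro N x y
  have hexp : Real.exp (R * ‖x‖) ≤ Real.exp ((R + 1) * ‖x‖) := by
    apply Real.exp_le_exp.2
    nlinarith [norm_nonneg x]
  -- rewrite integrand via L
  have hre : (fun v => (φ N v : ℂ) *
      Complex.exp (((inner ℝ x v : ℝ) : ℂ) + Complex.I * ((inner ℝ y v : ℝ) : ℂ))) =
      fun v => (φ N v : ℂ) * Complex.exp (PWAux.L x y v) := by
    funext v; rw [PWAux.L_apply]
  rw [show (∫ v, (φ N v : ℂ) *
      Complex.exp (((inner ℝ x v : ℝ) : ℂ) + Complex.I * ((inner ℝ y v : ℝ) : ℂ))) =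
      ∫ v, (φ N v : ℂ) * Complex.exp (PWAux.L x y v) by rw [hre]]
  have hφbd : ∀ v, |φ N v| ≤ C0 := by
    intro v
    have := hC0b N [] (Nat.zero_le N) v
    simpa [multiDeriv] using this
  have hypos : (0:ℝ) < 1 + ‖y‖ := by positivity
  have hypow : (0:ℝ) < (1 + ‖y‖) ^ N := by positivity
  rw [le_div_iff₀ hypow]
  have hNpow : (1:ℝ) ≤ ((N:ℝ) + 1) ^ N := one_le_pow₀ (by exact_mod_cast Nat.succ_le_succ (Nat.zero_le N))
  rcases le_or_gt 1 ‖y‖ with hy | hy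
  · -- main case: integrate by parts N times in a well-chosen coordinate
    obtain ⟨j, hj⟩ := PWAux.exists_coord hn y
    set zc : ℂ := ((x j : ℝ) : ℂ) + Complex.I * ((y j : ℝ) : ℂ) with hzc
    have him : |y j| ≤ ‖zc‖ := by
      have h1 : zc.im = y j := by simp [hzc]
      have := Complex.abs_im_le_norm zc
      rw [h1] at this
      simpa using this
    have hyjpos : 0 < |y j| := by nlinarith [Real.sqrt_nonneg (n:ℝ)]
    have hzpos : (0:ℝ) < ‖zc‖ := lt_of_lt_of_le hyjpos him
    have hkey := PWAux.ibp_iter x y hK (hsmooth N) (hsupp N) j N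
    have hnorm : ‖zc‖ ^ N * ‖∫ v, (φ N v : ℂ) * Complex.exp (PWAux.L x y v)‖ =
        ‖∫ v, (multiDeriv (List.replicate N j) (φ N) v : ℂ) *
          Complex.exp (PWAux.L x y v)‖ := by
      rw [hkey, norm_mul, norm_pow, norm_neg]
    have hMN : ∀ v, |multiDeriv (List.replicate N j) (φ N) v| ≤
        C0 ^ (N + 1) * ((N:ℝ) + 1) ^ N := by
      intro v
      have := hC0b N (List.replicate N j) (by simp) v
      simpa using this
    have hint2 : ‖∫ v, (multiDeriv (List.replicate N j) (φ N) v : ℂ) *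
        Complex.exp (PWAux.L x y v)‖ ≤
        (C0 ^ (N + 1) * ((N:ℝ) + 1) ^ N) * Real.exp (R * ‖x‖) * V :=
      PWAux.norm_int_le x y hK hR
        (PWAux.multiDeriv_contDiff _ (hsmooth N) _).continuous
        (PWAux.multiDeriv_support hK.isClosed _ (hsupp N) _) hMN
    have hzy : 1 + ‖y‖ ≤ 2 * Real.sqrt n * ‖zc‖ := by
      calc 1 + ‖y‖ ≤ 2 * ‖y‖ := by linarith
        _ ≤ 2 * (Real.sqrt n * |y j|) := by linarith
        _ ≤ 2 * (Real.sqrt n * ‖zc‖) := by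
            have := mul_le_mul_of_nonneg_left him hsqnn
            linarith
        _ = 2 * Real.sqrt n * ‖zc‖ := by ring
    have hzyN : (1 + ‖y‖) ^ N ≤ (2 * Real.sqrt n) ^ N * ‖zc‖ ^ N := by
      rw [← mul_pow]
      exact pow_le_pow_left₀ (by positivity) hzy N
    have hmain : (2 * Real.sqrt n) ^ N * C0 ^ (N + 1) * V ≤ C ^ (N + 1) := by
      calc (2 * Real.sqrt n) ^ N * C0 ^ (N + 1) * V
          ≤ (2 * Real.sqrt n + 2) ^ N * (C0 + 1) ^ (N + 1) * (V + 1) := by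
            gcongr <;> linarith
        _ ≤ (2 * Real.sqrt n + 2) ^ (N + 1) * (C0 + 1) ^ (N + 1) * (V + 1) ^ (N + 1) := by
            have h1 : (2 * Real.sqrt n + 2) ^ N ≤ (2 * Real.sqrt n + 2) ^ (N + 1) :=
              pow_le_pow_right₀ (by linarith) (Nat.le_succ N)
            have h2 : (V + 1) ≤ (V + 1) ^ (N + 1) :=
              le_self_pow₀ (by linarith) (Nat.succ_ne_zero N)
            have h3 : (0:ℝ) ≤ (C0 + 1) ^ (N + 1) := by positivity
            have h4 : (0:ℝ) ≤ (2 * Real.sqrt n + 2) ^ (N + 1) := by positivity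
            calc (2 * Real.sqrt n + 2) ^ N * (C0 + 1) ^ (N + 1) * (V + 1)
                ≤ (2 * Real.sqrt n + 2) ^ (N + 1) * (C0 + 1) ^ (N + 1) * (V + 1) := by
                  have := mul_le_mul_of_nonneg_right
                    (mul_le_mul_of_nonneg_right h1 h3) (by linarith : (0:ℝ) ≤ V + 1)
                  linarith
              _ ≤ (2 * Real.sqrt n + 2) ^ (N + 1) * (C0 + 1) ^ (N + 1) * (V + 1) ^ (N + 1) := by
                  have h5 : (0:ℝ) ≤ (2 * Real.sqrt n + 2) ^ (N + 1) * (C0 + 1) ^ (N + 1) :=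
                    mul_nonneg h4 h3
                  exact mul_le_mul_of_nonneg_left h2 h5
        _ = C ^ (N + 1) := by rw [hCdef, mul_pow, mul_pow]
    calc ‖∫ v, (φ N v : ℂ) * Complex.exp (PWAux.L x y v)‖ * (1 + ‖y‖) ^ N
        ≤ ‖∫ v, (φ N v : ℂ) * Complex.exp (PWAux.L x y v)‖ *
          ((2 * Real.sqrt n) ^ N * ‖zc‖ ^ N) := by gcongr
      _ = (2 * Real.sqrt n) ^ N *
          (‖zc‖ ^ N * ‖∫ v, (φ N v : ℂ) * Complex.exp (PWAux.L x y v)‖) := by ring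
      _ = (2 * Real.sqrt n) ^ N * ‖∫ v, (multiDeriv (List.replicate N j) (φ N) v : ℂ) *
          Complex.exp (PWAux.L x y v)‖ := by rw [hnorm]
      _ ≤ (2 * Real.sqrt n) ^ N *
          ((C0 ^ (N + 1) * ((N:ℝ) + 1) ^ N) * Real.exp (R * ‖x‖) * V) := by
            gcongr
      _ = ((2 * Real.sqrt n) ^ N * C0 ^ (N + 1) * V) * ((N:ℝ) + 1) ^ N *
          Real.exp (R * ‖x‖) := by ring
      _ ≤ C ^ (N + 1) * ((N:ℝ) + 1) ^ N * Real.exp ((R + 1) * ‖x‖) := by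
          have h6 : (0:ℝ) ≤ ((N:ℝ) + 1) ^ N := by positivity
          exact mul_le_mul (mul_le_mul_of_nonneg_right hmain h6) hexp
            (Real.exp_nonneg _) (by positivity)
  · -- easy case: ‖y‖ < 1
    have hint : ‖∫ v, (φ N v : ℂ) * Complex.exp (PWAux.L x y v)‖ ≤
        C0 * Real.exp (R * ‖x‖) * V :=
      PWAux.norm_int_le x y hK hR (hsmooth N).continuous (hsupp N) hφbd
    have hyp : (1 + ‖y‖) ^ N ≤ 2 ^ N :=
      pow_le_pow_left₀ (by positivity) (by linarith) N
    have h2C : (2:ℝ) ≤ C := by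
      rw [hCdef]
      nlinarith [mul_nonneg hC0.le hVnn, hsq, mul_nonneg hsqnn hVnn,
        mul_nonneg hsqnn hC0.le, mul_nonneg (mul_nonneg hsqnn hC0.le) hVnn]
    have key2 : C0 * V * 2 ^ N ≤ C ^ (N + 1) := by
      have hC0V : C0 * V ≤ C := by
        rw [hCdef]
        nlinarith [mul_nonneg hC0.le hVnn, hsq, mul_nonneg hsqnn hVnn,
        mul_nonneg hsqnn hC0.le, mul_nonneg (mul_nonneg hsqnn hC0.le) hVnn]
      calc C0 * V * 2 ^ N ≤ C * C ^ N :=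
            mul_le_mul hC0V (pow_le_pow_left₀ (by norm_num) h2C N)
              (by positivity) (by linarith)
        _ = C ^ (N + 1) := by rw [pow_succ]; ring
    calc ‖∫ v, (φ N v : ℂ) * Complex.exp (PWAux.L x y v)‖ * (1 + ‖y‖) ^ N
        ≤ (C0 * Real.exp (R * ‖x‖) * V) * 2 ^ N :=
          mul_le_mul hint hyp (by positivity) (by positivity)
      _ = (C0 * V * 2 ^ N) * Real.exp (R * ‖x‖) := by ring
      _ ≤ C ^ (N + 1) * Real.exp (R * ‖x‖) :=
          mul_le_mul_of_nonneg_right key2 (Real.exp_nonneg _)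
      _ ≤ C ^ (N + 1) * (((N:ℝ) + 1) ^ N * Real.exp ((R + 1) * ‖x‖)) := by
          have : Real.exp (R * ‖x‖) ≤ ((N:ℝ) + 1) ^ N * Real.exp ((R + 1) * ‖x‖) :=
            hexp.trans (le_mul_of_one_le_left (Real.exp_nonneg _) hNpow)
          exact mul_le_mul_of_nonneg_left this (by positivity)
      _ = C ^ (N + 1) * ((N:ℝ) + 1) ^ N * Real.exp ((R + 1) * ‖x‖) := by ring
end
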